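/- For every k ≥ 1 and every k-trace (p, ℓ, r), the number f_{(p,ℓ,r)}(n) of arithmetic formulas for n with trace (p,ℓ,r) satisfies f_{(p,ℓ,r)}(n) = Σ_{n₁+⋯+n_p+m = n+p} binom(m,p) f₀(m) Π_{i=1}^p (f_{ℓᵢ} *' f_{rᵢ})(nᵢ), where the sum is over positive integers n₁,…,n_p, m. -/

import Mathlib

/-- Arithmetic formulas built from the constant 1, addition and multiplication. -/
inductive Formula : Type
  | one : Formula
  | add : Formula → Formula → Formula
  | mul : Formula → Formula → Formula

/-- The value of an arithmetic formula. -/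
def Formula.val : Formula → ℕ
  | .one => 1
  | .add a b => a.val + b.val
  | .mul a b => a.val * b.val

/-- Validity: multiplication by 1 is not allowed. -/
def Formula.Valid : Formula → Prop
  | .one => True
  | .add a b => a.Valid ∧ b.Valid
  | .mul a b => a.Valid ∧ b.Valid ∧ 2 ≤ a.val ∧ 2 ≤ b.val

/-- `f n` is the number of arithmetic formulas for `n`. -/
noncomputable def f (n : ℕ) : ℕ := {A : Formula | A.Valid ∧ A.val = n}.ncard

/-- The number of multiplicative nodes of a formula. -/
def Formula.mulCount : Formula → ℕ
  | .one => 0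
  | .add a b => a.mulCount + b.mulCount
  | .mul a b => a.mulCount + b.mulCount + 1

/-- The list, from left to right, of pairs `(ℓᵢ, rᵢ)` where `ℓᵢ` (resp. `rᵢ`)
is the number of multiplicative nodes in the left (resp. right) subtree of the
`i`-th primitive multiplicative node (a multiplicative node with no
multiplicative ancestor). This encodes the trace `(p, ℓ, r)` of the formula,
with `p` the length of the list. -/
def Formula.primTraces : Formula → List (ℕ × ℕ)
  | .one => []
  | .add a b => a.primTraces ++ b.primTraces
  | .mul a b => [(a.mulCount, b.mulCount)]

/-- `fMul k n` is the number of arithmetic formulas for `n` with exactly `k`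
multiplicative nodes. -/
noncomputable def fMul (k n : ℕ) : ℕ :=
  {A : Formula | A.Valid ∧ A.val = n ∧ A.mulCount = k}.ncard

/-- `fTrace n L` is the number of arithmetic formulas for `n` with trace `L`. -/
noncomputable def fTrace (n : ℕ) (L : List (ℕ × ℕ)) : ℕ :=
  {A : Formula | A.Valid ∧ A.val = n ∧ A.primTraces = L}.ncard

/-- Proper Dirichlet convolution. -/
def dconv (g h : ℕ → ℕ) (n : ℕ) : ℕ :=
  ∑ d ∈ n.properDivisors.filter (1 < ·), g d * h (n / d)


/-!
Let `T_L = ∑ₙ f_L(n) xⁿ` and `G_{ℓ,r} = ∑ₙ (f_ℓ *' f_r)(n) xⁿ`. Splitting a formula at its root: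
the leaf `1` contributes `x`, a multiplicative root is the unique primitive node and contributes
`G_{ℓ,r}`, and an additive root distributes the primitive nodes over its two subtrees, i.e. splits
`L = take i L ++ drop i L`. Hence `T_L = seed_L + ∑ᵢ T_{take i L} T_{drop i L}`.

For `L = []` this is the Catalan equation `F = x + F²`, and multiplying it by `binom(m, p)` and
using Vandermonde shows that `A_p = ∑ₘ binom(m, p) f₀(m) xᵐ` satisfies
`A_p = [p ≤ 1] x + ∑_{i+j=p} A_i A_j`. So `x^{|L|} T_L` and `A_{|L|} ∏ᵢ G_{ℓᵢ,rᵢ}` obey the same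
recursion; as neither has a constant term, the recursion determines all their coefficients, and
the theorem is the coefficient of `x^{n+|L|}`.
-/

deriving instance DecidableEq for Formula

open Finset PowerSeries

lemma Nat.two_le_and_two_le_and_mul_eq_iff {a b n : ℕ} :
    2 ≤ a ∧ 2 ≤ b ∧ a * b = n ↔ a ∈ n.properDivisors ∧ 1 < a ∧ b = n / a := by
  rw [Nat.mem_properDivisors]
  constructor
  · rintro ⟨ha, hb, rfl⟩
    exact ⟨⟨dvd_mul_right a b, by nlinarith⟩, ha, by rw [Nat.mul_div_cancel_left b (by omega)]⟩
  · rintro ⟨⟨⟨q, rfl⟩, hlt⟩, ha, rfl⟩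
    rw [Nat.mul_div_cancel_left q (by omega)]
    refine ⟨ha, ?_, rfl⟩
    by_contra! hq
    interval_cases q <;> omega

lemma List.ite_append_eq {α : Type*} [DecidableEq α] (l₁ l₂ L : List α) :
    (if l₁ ++ l₂ = L then 1 else 0 : ℕ) = ∑ i ∈ Finset.range (L.length + 1),
      (if l₁ = L.take i then 1 else 0) * (if l₂ = L.drop i then 1 else 0) := by
  split_ifs with h
  · subst h
    rw [Finset.sum_eq_single l₁.length]
    · simp
    · intro i hi hne
      simp only [Finset.mem_range, List.length_append] at hi
      have : l₁ ≠ (l₁ ++ l₂).take i := fun h => hne <| by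
        have := congrArg List.length h
        simp only [List.length_take, List.length_append] at this
        omega
      simp [this]
    · simp
  · refine (Finset.sum_eq_zero fun i _ => ?_).symm
    split_ifs with h₁ h₂ <;> simp_all [List.take_append_drop]

namespace PowerSeries

theorem eq_of_forall_eq_add_sum_take_mul_drop {R α : Type*} [Semiring R]
    {V W : List α → R⟦X⟧} (c : List α → R⟦X⟧)
    (hV : ∀ L, V L = c L + ∑ i ∈ range (L.length + 1), V (L.take i) * V (L.drop i))
    (hW : ∀ L, W L = c L + ∑ i ∈ range (L.length + 1), W (L.take i) * W (L.drop i))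
    (hV₀ : ∀ L, constantCoeff (V L) = 0) (hW₀ : ∀ L, constantCoeff (W L) = 0) : V = W := by
  suffices h : ∀ n L, coeff n (V L) = coeff n (W L) from
    funext fun L => ext fun n => h n L
  intro n
  induction n using Nat.strong_induction_on with
  | _ n ih =>
    intro L
    rw [hV, hW, map_add, map_add, map_sum, map_sum]
    congr 1
    refine sum_congr rfl fun i _ => ?_
    rw [coeff_mul, coeff_mul]
    refine sum_congr rfl fun ⟨a, b⟩ hab => ?_
    rw [HasAntidiagonal.mem_antidiagonal] at hab
    rcases Nat.eq_zero_or_pos a with rfl | ha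
    · simp [hV₀, hW₀]
    rcases Nat.eq_zero_or_pos b with rfl | hb
    · simp [hV₀, hW₀]
    rw [ih a (by omega), ih b (by omega)]

theorem coeff_prod_fin {R : Type*} [CommSemiring R] {k : ℕ} (H : Fin k → R⟦X⟧) (N : ℕ) :
    coeff N (∏ j, H j) = ∑ v ∈ Nat.antidiagonalTuple k N, ∏ j, coeff (v j) (H j) := by
  rw [coeff_prod]
  exact sum_equiv Finsupp.equivFunOnFinite (by simp [Nat.mem_antidiagonalTuple]) (by simp)

theorem coeff_prod_fin_of_constantCoeff_eq_zero {R : Type*} [CommSemiring R] {k : ℕ}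
    {H : Fin k → R⟦X⟧} (hH : ∀ j, constantCoeff (H j) = 0) (N : ℕ) :
    coeff N (∏ j, H j) =
      ∑ v ∈ (Nat.antidiagonalTuple k N).filter (fun v => ∀ i, 0 < v i), ∏ j, coeff (v j) (H j) := by
  rw [coeff_prod_fin, sum_filter_of_ne]
  intro v _ hne i
  by_contra hi
  exact hne (prod_eq_zero (mem_univ i)
    (by rw [Nat.eq_zero_of_not_pos hi, coeff_zero_eq_constantCoeff_apply, hH]))

end PowerSeries

namespace Formula

lemma val_pos : ∀ A : Formula, 0 < A.val
  | one => Nat.one_pos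
  | add a _ => Nat.add_pos_left a.val_pos _
  | mul a b => Nat.mul_pos a.val_pos b.val_pos

lemma finite_setOf_valid_val_le (n : ℕ) : {A : Formula | A.Valid ∧ A.val ≤ n}.Finite := by
  induction n with
  | zero => exact Set.finite_empty.subset fun A h => absurd h.2 (not_le.2 A.val_pos)
  | succ n ih =>
    refine (((ih.image2 add ih).union (ih.image2 mul ih)).insert one).subset ?_
    rintro (_ | ⟨a, b⟩ | ⟨a, b⟩) ⟨hv, hn⟩
    · exact Set.mem_insert _ _
    · have := a.val_pos; have := b.val_pos
      simp only [val] at hn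
      exact Or.inr (Or.inl ⟨a, ⟨hv.1, by omega⟩, b, ⟨hv.2, by omega⟩, rfl⟩)
    · obtain ⟨ha, hb, ha2, hb2⟩ := hv
      simp only [val] at hn
      exact Or.inr (Or.inr ⟨a, ⟨ha, by nlinarith⟩, b, ⟨hb, by nlinarith⟩, rfl⟩)

noncomputable def withVal (n : ℕ) : Finset Formula :=
  ((finite_setOf_valid_val_le n).subset fun _ h => ⟨h.1, h.2.le⟩ :
    {A : Formula | A.Valid ∧ A.val = n}.Finite).toFinset

@[simp]
lemma mem_withVal {A : Formula} {n : ℕ} : A ∈ withVal n ↔ A.Valid ∧ A.val = n :=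
  Set.Finite.mem_toFinset _

lemma withVal_zero : withVal 0 = ∅ :=
  eq_empty_of_forall_notMem fun A h => (mem_withVal.1 h).2.not_gt A.val_pos

lemma ncard_setOf_valid_val_eq (n : ℕ) (P : Formula → Prop) [DecidablePred P] :
    {A : Formula | A.Valid ∧ A.val = n ∧ P A}.ncard = #{A ∈ withVal n | P A} := by
  rw [← Set.ncard_coe_finset]
  congr
  ext A
  simp [and_assoc]

lemma withVal_eq (n : ℕ) :
    withVal n = (if n = 1 then {one} else ∅)
      ∪ ((antidiagonal n).biUnion fun x => withVal x.1 ×ˢ withVal x.2).image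
          (fun p => add p.1 p.2)
      ∪ ((n.properDivisors.filter (1 < ·)).biUnion fun d => withVal d ×ˢ withVal (n / d)).image
          (fun p => mul p.1 p.2) := by
  ext (_ | ⟨a, b⟩ | ⟨a, b⟩)
  · split_ifs <;> simp [val, Valid, eq_comm, *]
  · split_ifs <;> simp [val, Valid, and_assoc, and_comm, and_left_comm]
  · have key := Nat.two_le_and_two_le_and_mul_eq_iff (a := a.val) (b := b.val) (n := n)
    rw [Nat.mem_properDivisors] at key
    split_ifs <;> simp [val, Valid] <;> tauto

lemma sum_withVal {M : Type*} [AddCommMonoid M] (n : ℕ) (φ : Formula → M) :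
    ∑ A ∈ withVal n, φ A = (if n = 1 then φ one else 0)
      + ∑ x ∈ antidiagonal n, ∑ a ∈ withVal x.1, ∑ b ∈ withVal x.2, φ (add a b)
      + ∑ d ∈ n.properDivisors.filter (1 < ·), ∑ a ∈ withVal d, ∑ b ∈ withVal (n / d),
          φ (mul a b) := by
  have val_eq {A : Formula} {m m' : ℕ} (h : A ∈ withVal m) (h' : A ∈ withVal m') : m = m' :=
    (mem_withVal.1 h).2.symm.trans (mem_withVal.1 h').2
  rw [withVal_eq, sum_union, sum_union, sum_image, sum_image, sum_biUnion, sum_biUnion]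
  · simp only [sum_product, apply_ite (∑ A ∈ ·, φ A), sum_singleton, sum_empty]
  · intro d _ d' _ hne
    simp only [Function.onFun, disjoint_left, mem_product]
    exact fun p hp hp' => hne (val_eq hp.1 hp'.1)
  · intro x _ y _ hne
    simp only [Function.onFun, disjoint_left, mem_product]
    exact fun p hp hp' => hne (Prod.ext (val_eq hp.1 hp'.1) (val_eq hp.2 hp'.2))
  · exact fun p _ q _ h => by simpa [Prod.ext_iff] using h
  · exact fun p _ q _ h => by simpa [Prod.ext_iff] using h
  · split_ifs <;> simp [disjoint_left]
  · split_ifs <;> simp [disjoint_left] <;> rintro _ _ _ - - - rfl <;> simp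

lemma primTraces_eq_nil_iff (A : Formula) : A.primTraces = [] ↔ A.mulCount = 0 := by
  induction A <;> simp [primTraces, mulCount, *]

end Formula

lemma fTrace_eq_card (n : ℕ) (L : List (ℕ × ℕ)) :
    fTrace n L = #{A ∈ Formula.withVal n | A.primTraces = L} :=
  Formula.ncard_setOf_valid_val_eq n _

lemma fMul_eq_card (k n : ℕ) : fMul k n = #{A ∈ Formula.withVal n | A.mulCount = k} :=
  Formula.ncard_setOf_valid_val_eq n _

noncomputable def traceSeries (L : List (ℕ × ℕ)) : ℕ⟦X⟧ := mk fun n => fTrace n L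

noncomputable def dconvSeries (x : ℕ × ℕ) : ℕ⟦X⟧ := mk (dconv (fMul x.1) (fMul x.2))

noncomputable def traceSeed : List (ℕ × ℕ) → ℕ⟦X⟧
  | [] => X
  | [x] => dconvSeries x
  | _ :: _ :: _ => 0

/-- `A_p = xᵖ F⁽ᵖ⁾ / p!` for the Catalan series `F = ∑ₘ f₀(m) xᵐ`. -/
noncomputable def binomSeries (p : ℕ) : ℕ⟦X⟧ := mk fun m => m.choose p * fMul 0 m

lemma traceSeries_eq (L : List (ℕ × ℕ)) : traceSeries L =
    traceSeed L + ∑ i ∈ range (L.length + 1), traceSeries (L.take i) * traceSeries (L.drop i) := by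
  ext n
  simp only [traceSeries, coeff_mk, map_add, map_sum, coeff_mul, fTrace_eq_card, card_filter]
  rw [Formula.sum_withVal, add_right_comm]
  congr 1
  · rcases L with _ | ⟨x, _ | ⟨y, L⟩⟩
    · simp [traceSeed, coeff_X, Formula.primTraces]
    · have h (a b : Formula) : (if (a.mul b).primTraces = [x] then 1 else 0 : ℕ) =
          (if a.mulCount = x.1 then 1 else 0) * (if b.mulCount = x.2 then 1 else 0) := by
        rw [ite_zero_mul_ite_zero]
        simp [Formula.primTraces, Prod.ext_iff]
      simp only [traceSeed, dconvSeries, coeff_mk, dconv, fMul_eq_card, h, ← sum_mul_sum,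
        ← card_filter]
      simp [Formula.primTraces]
    · simp [traceSeed, Formula.primTraces]
  · -- `(a.add b).primTraces` stays unreduced: the `Decidable` instance in the goal mentions it
    have h (a b : Formula) : (if (a.add b).primTraces = L then 1 else 0 : ℕ) =
        ∑ i ∈ range (L.length + 1), (if a.primTraces = L.take i then 1 else 0) *
          (if b.primTraces = L.drop i then 1 else 0) :=
      List.ite_append_eq a.primTraces b.primTraces L
    simp only [h, sum_mul_sum]
    rw [sum_comm (s := range _)]
    refine sum_congr rfl fun x _ => ?_
    rw [sum_comm (s := range _)]
    exact sum_congr rfl fun a _ => sum_comm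

lemma traceSeries_nil : traceSeries [] = PowerSeries.mk (fMul 0) := by
  ext n
  simp [traceSeries, fMul_eq_card, fTrace_eq_card, Formula.primTraces_eq_nil_iff]

lemma mk_fMul_zero_eq :
    PowerSeries.mk (fMul 0) = X + PowerSeries.mk (fMul 0) * PowerSeries.mk (fMul 0) := by
  simpa [traceSeries_nil, traceSeed] using traceSeries_eq []

lemma binomSeries_eq (p : ℕ) : binomSeries p =
    (if p ≤ 1 then X else 0) + ∑ i ∈ range (p + 1), binomSeries i * binomSeries (p - i) := by
  ext m
  have hcat := congrArg (coeff m) mk_fMul_zero_eq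
  simp only [coeff_mk, map_add, coeff_mul] at hcat
  simp only [binomSeries, coeff_mk, map_add, map_sum, coeff_mul, hcat, mul_add, mul_sum]
  congr 1
  · simp only [apply_ite (coeff m), coeff_X, map_zero]
    split_ifs <;> subst_vars <;> simp
    · interval_cases p <;> rfl
    · exact Nat.choose_eq_zero_of_lt (by omega)
  · rw [sum_comm]
    refine sum_congr rfl fun x hx => ?_
    rw [← mem_antidiagonal.1 hx, Nat.add_choose_eq, Nat.sum_antidiagonal_eq_sum_range_succ_mk,
      sum_mul]
    exact sum_congr rfl fun i _ => by ring

lemma constantCoeff_traceSeries (L : List (ℕ × ℕ)) : constantCoeff (traceSeries L) = 0 := by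
  simp [traceSeries, fTrace_eq_card, Formula.withVal_zero]

lemma constantCoeff_binomSeries (p : ℕ) : constantCoeff (binomSeries p) = 0 := by
  simp [binomSeries, fMul_eq_card, Formula.withVal_zero]

lemma constantCoeff_dconvSeries (x : ℕ × ℕ) : constantCoeff (dconvSeries x) = 0 := by
  simp [dconvSeries, dconv]

lemma X_pow_mul_traceSeries_eq (L : List (ℕ × ℕ)) :
    X ^ L.length * traceSeries L = X ^ L.length * traceSeed L +
      ∑ i ∈ range (L.length + 1), (X ^ (L.take i).length * traceSeries (L.take i)) *
        (X ^ (L.drop i).length * traceSeries (L.drop i)) := by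
  rw [traceSeries_eq, mul_add, mul_sum]
  congr 1
  refine sum_congr rfl fun i _ => ?_
  rw [← congrArg List.length (L.take_append_drop i), List.length_append, pow_add]
  ring

lemma binomSeries_mul_prod_eq (L : List (ℕ × ℕ)) :
    binomSeries L.length * (L.map dconvSeries).prod = X ^ L.length * traceSeed L +
      ∑ i ∈ range (L.length + 1),
        (binomSeries (L.take i).length * ((L.take i).map dconvSeries).prod) *
          (binomSeries (L.drop i).length * ((L.drop i).map dconvSeries).prod) := by
  rw [binomSeries_eq, add_mul, sum_mul]
  congr 1
  · rcases L with _ | ⟨x, _ | ⟨y, L⟩⟩ <;> simp [traceSeed]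
  · refine sum_congr rfl fun i hi => ?_
    have hprod : (L.map dconvSeries).prod =
        ((L.take i).map dconvSeries).prod * ((L.drop i).map dconvSeries).prod := by
      rw [← List.prod_append, ← List.map_append, List.take_append_drop]
    rw [hprod, List.length_take, List.length_drop,
      min_eq_left (Nat.lt_succ_iff.1 (mem_range.1 hi))]
    ring

lemma coeff_binomSeries_mul_prod (L : List (ℕ × ℕ)) (N : ℕ) :
    coeff N (binomSeries L.length * (L.map dconvSeries).prod) =
      ∑ v ∈ (Finset.Nat.antidiagonalTuple (L.length + 1) N).filter (fun v => ∀ i, 0 < v i),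
        (v (Fin.last L.length)).choose L.length * fMul 0 (v (Fin.last L.length)) *
          ∏ i : Fin L.length, dconv (fMul (L.get i).1) (fMul (L.get i).2) (v i.castSucc) := by
  set H : Fin (L.length + 1) → ℕ⟦X⟧ :=
    Fin.snoc (fun i : Fin L.length => dconvSeries (L.get i)) (binomSeries L.length)
  have hH : binomSeries L.length * (L.map dconvSeries).prod = ∏ j, H j := by
    simp [H, Fin.prod_univ_castSucc, mul_comm]
  rw [hH, coeff_prod_fin_of_constantCoeff_eq_zero]
  · refine sum_congr rfl fun v _ => ?_
    simp [H, Fin.prod_univ_castSucc, binomSeries, dconvSeries, mul_comm]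
  · intro j
    cases j using Fin.lastCases <;> simp [H, constantCoeff_binomSeries, constantCoeff_dconvSeries]

theorem stmt18_general (L : List (ℕ × ℕ)) (n : ℕ) :
    fTrace n L =
      ∑ v ∈ (Finset.Nat.antidiagonalTuple (L.length + 1) (n + L.length)).filter
          (fun v => ∀ i, 0 < v i),
        (v (Fin.last L.length)).choose L.length * fMul 0 (v (Fin.last L.length)) *
          ∏ i : Fin L.length,
            dconv (fMul (L.get i).1) (fMul (L.get i).2) (v i.castSucc) := by
  have h := eq_of_forall_eq_add_sum_take_mul_drop (fun L => X ^ L.length * traceSeed L)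
    X_pow_mul_traceSeries_eq binomSeries_mul_prod_eq
    (fun L => by simp [constantCoeff_traceSeries]) (fun L => by simp [constantCoeff_binomSeries])
  have := congrArg (coeff (n + L.length)) (congrFun h L)
  rwa [coeff_X_pow_mul, traceSeries, coeff_mk, coeff_binomSeries_mul_prod] at this

/-- For every `k ≥ 1` and every `k`-trace `(p, ℓ, r)` (encoded as the list
`L = [(ℓ₁,r₁),…,(ℓ_p,r_p)]` with `∑(ℓᵢ + rᵢ + 1) = k`),
`f_{(p,ℓ,r)}(n) = ∑_{n₁+⋯+n_p+m = n+p} binom(m,p) f₀(m) ∏ᵢ (f_{ℓᵢ} *' f_{rᵢ})(nᵢ)`,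
the sum being over positive integers `n₁, …, n_p, m`. -/
theorem stmt18 (k : ℕ) (hk : 1 ≤ k) (L : List (ℕ × ℕ))
    (hL : (L.map fun x => x.1 + x.2 + 1).sum = k) (n : ℕ) (hn : 1 ≤ n) :
    fTrace n L =
      ∑ v ∈ (Finset.Nat.antidiagonalTuple (L.length + 1) (n + L.length)).filter
          (fun v => ∀ i, 0 < v i),
        (v (Fin.last L.length)).choose L.length * fMul 0 (v (Fin.last L.length)) *
          ∏ i : Fin L.length,
            dconv (fMul (L.get i).1) (fMul (L.get i).2) (v i.castSucc) :=
  stmt18_general L n
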